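/- For τ in the upper half-plane and z ∈ ℂ, ϑ₁₁(2τ, z − 1/2) · ϑ₁₁(2τ, z + 1/2) = − ϑ₁₀(2τ, z)². -/
import Mathlib

open Real Complex Filter Topology

noncomputable section

noncomputable def theta00 (τ z : ℂ) : ℂ :=
  ∑' n : ℤ, Complex.exp (2*(π:ℂ)*Complex.I*(n:ℂ)*z) *
    Complex.exp (2*(π:ℂ)*Complex.I*τ*((n:ℂ)^2/2))

noncomputable def theta01 (τ z : ℂ) : ℂ :=
  ∑' n : ℤ, (-1:ℂ)^n * Complex.exp (2*(π:ℂ)*Complex.I*(n:ℂ)*z) *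
    Complex.exp (2*(π:ℂ)*Complex.I*τ*((n:ℂ)^2/2))

noncomputable def theta10 (τ z : ℂ) : ℂ :=
  ∑' n : ℤ, Complex.exp (2*(π:ℂ)*Complex.I*((n:ℂ)+1/2)*z) *
    Complex.exp (2*(π:ℂ)*Complex.I*τ*((1/2)*((n:ℂ)+1/2)^2))

noncomputable def theta11 (τ z : ℂ) : ℂ :=
  Complex.I * ∑' n : ℤ, (-1:ℂ)^n * Complex.exp (2*(π:ℂ)*Complex.I*((n:ℂ)+1/2)*z) *
    Complex.exp (2*(π:ℂ)*Complex.I*τ*((1/2)*((n:ℂ)+1/2)^2))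

lemma aux_key (n : ℤ) : Complex.exp ((π:ℂ)*Complex.I*n) = (-1:ℂ)^n := by
  rw [show (π:ℂ)*Complex.I*n = (n:ℂ)*(π*Complex.I) by ring, Complex.exp_int_mul,
    Complex.exp_pi_mul_I]

lemma aux_key2 : Complex.exp ((π:ℂ)*Complex.I/2) = Complex.I := by
  rw [show (π:ℂ)*Complex.I/2 = (↑(π/2))*Complex.I by push_cast; ring, Complex.exp_mul_I]
  simp

lemma aux_key3 (n : ℤ) : ((-1:ℂ)^n * Complex.I)
    = Complex.exp ((π:ℂ)*Complex.I*n + (π:ℂ)*Complex.I/2) := by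
  rw [Complex.exp_add, aux_key, aux_key2]

lemma neg_one_zpow_sq (n : ℤ) : ((-1:ℂ)^n) * ((-1:ℂ)^n) = 1 := by
  rw [← zpow_add₀ (by norm_num : (-1:ℂ) ≠ 0)]
  rw [show n + n = 2 * n by ring, zpow_mul]
  norm_num

lemma theta11_left (τ z : ℂ) : theta11 τ (z - 1/2) = theta10 τ z := by
  rw [theta11, theta10, ← tsum_mul_left]
  refine tsum_congr fun n => ?_
  have h : Complex.exp (2*(π:ℂ)*Complex.I*((n:ℂ)+1/2)*z)
      = Complex.exp (2*(π:ℂ)*Complex.I*((n:ℂ)+1/2)*(z - 1/2)) * ((-1:ℂ)^n * Complex.I) := by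
    rw [aux_key3, ← Complex.exp_add]
    congr 1
    ring
  rw [h]
  ring

lemma theta11_right (τ z : ℂ) : theta11 τ (z + 1/2) = -theta10 τ z := by
  rw [theta11, theta10, ← tsum_mul_left, ← tsum_neg]
  refine tsum_congr fun n => ?_
  have h : Complex.exp (2*(π:ℂ)*Complex.I*((n:ℂ)+1/2)*(z + 1/2))
      = Complex.exp (2*(π:ℂ)*Complex.I*((n:ℂ)+1/2)*z) * ((-1:ℂ)^n * Complex.I) := by
    rw [aux_key3, ← Complex.exp_add]
    congr 1
    ring
  rw [h]
  have h2 : (Complex.I * Complex.I) * (((-1:ℂ)^n) * ((-1:ℂ)^n)) = -1 := by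
    rw [Complex.I_mul_I, neg_one_zpow_sq]; ring
  calc Complex.I * ((-1:ℂ)^n * (Complex.exp (2*(π:ℂ)*Complex.I*((n:ℂ)+1/2)*z)
        * ((-1:ℂ)^n * Complex.I))
        * Complex.exp (2*(π:ℂ)*Complex.I*τ*((1/2)*((n:ℂ)+1/2)^2)))
      = ((Complex.I * Complex.I) * (((-1:ℂ)^n) * ((-1:ℂ)^n)))
        * (Complex.exp (2*(π:ℂ)*Complex.I*((n:ℂ)+1/2)*z)
          * Complex.exp (2*(π:ℂ)*Complex.I*τ*((1/2)*((n:ℂ)+1/2)^2))) := by ring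
    _ = -(Complex.exp (2*(π:ℂ)*Complex.I*((n:ℂ)+1/2)*z)
          * Complex.exp (2*(π:ℂ)*Complex.I*τ*((1/2)*((n:ℂ)+1/2)^2))) := by rw [h2]; ring

theorem stmt12 (τ z : ℂ) (hτ : 0 < τ.im) :
    theta11 (2*τ) (z - 1/2) * theta11 (2*τ) (z + 1/2) = -(theta10 (2*τ) z)^2 := by
  rw [theta11_left, theta11_right]
  ring

end
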